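/- arXiv:2104.09780 — 3 statements merged into one kernel-verified Lean document; each statement's English description precedes it below -/
import Mathlib

section
/- The DistMult scoring function is a special case of the RAM scoring function: for any vectors u1, u2, e_h, e_t ∈ R^d, setting entity multi-embeddings E_h = [e_h; e_h'] and E_t = [e_t; e_t'] (rows indexed 1,2) with arbitrary second rows, and pattern matrices P1 = [[1/2,0],[1/2,0]], P2 = [[0,1/2],[0,1/2]], the RAM score ⟨u1, P1[1,:]E_h, P1[2,:]E_t⟩ + ⟨u2, P2[1,:]E_h, P2[2,:]E_t⟩ equals (1/4)·(⟨u1, e_h, e_t⟩ + ⟨u2, e_h', e_t'⟩). -/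
open Finset in
theorem distmult_special_case_of_RAM (d : ℕ)
    (u1 u2 eh eh' et et' : Fin d → ℝ) :
    (∑ j : Fin d, u1 j * ((1/2 : ℝ) * eh j + 0 * eh' j) * ((1/2 : ℝ) * et j + 0 * et' j))
    + (∑ j : Fin d, u2 j * (0 * eh j + (1/2 : ℝ) * eh' j) * (0 * et j + (1/2 : ℝ) * et' j))
    = (1/4 : ℝ) * ((∑ j : Fin d, u1 j * eh j * et j)
                   + ∑ j : Fin d, u2 j * eh' j * et' j) := by
  simp only [zero_mul, add_zero, zero_add]
  rw [mul_add, Finset.mul_sum, Finset.mul_sum]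
  congr 1 <;> exact Finset.sum_congr rfl fun j _ => by ring
end

section
/- The SimplE scoring function is a special case of the RAM scoring function: for vectors u1, u2 ∈ R^d and entity multi-embeddings E_h = [e_{h,1}; e_{h,2}], E_t = [e_{t,1}; e_{t,2}] ∈ R^{2×d}, with pattern matrices P1 = [[1/2,0],[0,1/2]] and P2 = [[0,1/2],[1/2,0]], the RAM score ⟨u1, P1[1,:]E_h, P1[2,:]E_t⟩ + ⟨u2, P2[1,:]E_h, P2[2,:]E_t⟩ equals (1/4)·(⟨u1, e_{h,1}, e_{t,2}⟩ + ⟨u2, e_{h,2}, e_{t,1}⟩). -/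
open Finset in
theorem simplE_special_case_of_RAM (d : ℕ)
    (u1 u2 eh1 eh2 et1 et2 : Fin d → ℝ) :
    (∑ j : Fin d, u1 j * ((1/2 : ℝ) * eh1 j + 0 * eh2 j) * (0 * et1 j + (1/2 : ℝ) * et2 j))
    + (∑ j : Fin d, u2 j * (0 * eh1 j + (1/2 : ℝ) * eh2 j) * ((1/2 : ℝ) * et1 j + 0 * et2 j))
    = (1/4 : ℝ) * ((∑ j : Fin d, u1 j * eh1 j * et2 j)
                   + ∑ j : Fin d, u2 j * eh2 j * et1 j) := by
  rw [mul_add, Finset.mul_sum, Finset.mul_sum, ← Finset.sum_add_distrib, ← Finset.sum_add_distrib]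
  exact Finset.sum_congr rfl fun j _ => by ring
end

section
/- (Full expressiveness of RAM, binary special case) Let E be a finite set of entities, R a finite set of binary relations, and F a finite set of η ≥ 1 true triples (r,h,t) ∈ R×E×E, enumerated as the 1st, ..., η-th triple. Assign to each entity e two vectors v_e^{(1)}, v_e^{(2)} ∈ R^η and to each relation r a vector u_r ∈ R^η by v_e^{(1)}[j] = 1 iff e is the head of the j-th triple in F (else 0), v_e^{(2)}[j] = 1 iff e is the tail of the j-th triple in F (else 0), and u_r[j] = 1 iff r is the relation of the j-th triple in F (else 0), and define φ(r,h,t) = Σ_{j=1}^η u_r[j]·v_h^{(1)}[j]·v_t^{(2)}[j]. Then φ(r,h,t) > 0 iff (r,h,t) ∈ F, and φ(r,h,t) = 0 iff (r,h,t) ∉ F. -/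
open Finset Classical in
theorem RAM_fully_expressive_binary {E R : Type*} (η : ℕ) (hη : 1 ≤ η)
    (f : Fin η → R × E × E) (r : R) (h t : E) :
    (0 < ∑ j : Fin η,
        (if (f j).1 = r then (1 : ℝ) else 0) *
        (if (f j).2.1 = h then (1 : ℝ) else 0) *
        (if (f j).2.2 = t then (1 : ℝ) else 0)
      ↔ ∃ j : Fin η, f j = (r, h, t)) ∧
    ((∑ j : Fin η,
        (if (f j).1 = r then (1 : ℝ) else 0) *
        (if (f j).2.1 = h then (1 : ℝ) else 0) *
        (if (f j).2.2 = t then (1 : ℝ) else 0)) = 0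
      ↔ ¬ ∃ j : Fin η, f j = (r, h, t)) := by
  classical
  have key : ∀ j : Fin η,
      (if (f j).1 = r then (1 : ℝ) else 0) *
        (if (f j).2.1 = h then (1 : ℝ) else 0) *
        (if (f j).2.2 = t then (1 : ℝ) else 0)
      = if f j = (r, h, t) then (1 : ℝ) else 0 := by
    intro j
    by_cases h1 : (f j).1 = r <;> by_cases h2 : (f j).2.1 = h <;>
      by_cases h3 : (f j).2.2 = t <;>
      simp [h1, h2, h3, Prod.ext_iff]
  simp only [key]
  rw [Finset.sum_boole]
  constructor
  · rw [Nat.cast_pos, Finset.card_pos, Finset.filter_nonempty_iff]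
    simp
  · rw [Nat.cast_eq_zero, Finset.card_eq_zero, Finset.filter_eq_empty_iff]
    simp
end
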